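/- arXiv:2106.09145 — 2 statements merged into one kernel-verified Lean document; each statement's English description precedes it below -/
import Mathlib

section
/- Let x ∈ A^ℤ be uniformly recurrent non-periodic with orbit closure X, and suppose m ≥ (R_x(4) − 1)/2. Then for every m-cylinder U of X, the sets σ^i(U) for −2 ≤ i ≤ 2 are pairwise disjoint. -/
/-- The set of `n`-factors of a two-sided infinite word `w`. -/
def factorsZ {A : Type*} (w : ℤ → A) (n : ℕ) : Set (Fin n → A) :=
  {u | ∃ k : ℤ, ∀ i : Fin n, u i = w (k + (i : ℤ))}

/-- The complexity function of a two-sided infinite word. -/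
noncomputable def complexityZ {A : Type*} (w : ℤ → A) (n : ℕ) : ℕ :=
  Nat.card (factorsZ w n)

/-- `u` occurs in the length-`M` window of `w` starting at `k`. -/
def OccursIn {A : Type*} (w : ℤ → A) {n : ℕ} (u : Fin n → A) (k : ℤ) (M : ℕ) : Prop :=
  ∃ j : ℤ, k ≤ j ∧ j + (n : ℤ) ≤ k + (M : ℤ) ∧ ∀ i : Fin n, u i = w (j + (i : ℤ))

/-- `M` is a recurrence bound for length-`n` factors of `w`. -/
def IsRecurrenceBound {A : Type*} (w : ℤ → A) (n M : ℕ) : Prop :=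
  ∀ u ∈ factorsZ w n, ∀ k : ℤ, OccursIn w u k M

def UniformlyRecurrent {A : Type*} (w : ℤ → A) : Prop :=
  ∀ n : ℕ, ∃ M : ℕ, IsRecurrenceBound w n M

/-- The recurrence function of `w`. -/
noncomputable def recurrenceFn {A : Type*} (w : ℤ → A) (n : ℕ) : ℕ :=
  sInf {M | IsRecurrenceBound w n M}

def PeriodicWord {A : Type*} (w : ℤ → A) : Prop :=
  ∃ k : ℤ, 1 ≤ k ∧ ∀ i : ℤ, w (i + k) = w i

/-- The `i`-th power of the shift: `(shiftFun i y) t = y (t + i)`. -/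
def shiftFun {A : Type*} (i : ℤ) (y : ℤ → A) : ℤ → A := fun t => y (t + i)

/-- Image of a set of words under the `i`-th power of the shift. -/
def shiftSet {A : Type*} (i : ℤ) (W : Set (ℤ → A)) : Set (ℤ → A) := shiftFun i '' W

/-- The cylinder set determined by a word `u` of length `2m+1` centred at the origin:
`{ y : y i = u (i + m) for −m ≤ i ≤ m }`. -/
def cylC {A : Type*} (m : ℕ) (u : Fin (2 * m + 1) → A) : Set (ℤ → A) :=
  {y | ∀ i : Fin (2 * m + 1), y ((i : ℤ) - (m : ℤ)) = u i}

/-- `U` is an `m`-cylinder of `X`: a nonempty intersection of `X` with a centred cylinder. -/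
def IsMCylinder {A : Type*} (X : Set (ℤ → A)) (m : ℕ) (U : Set (ℤ → A)) : Prop :=
  (∃ u : Fin (2 * m + 1) → A, U = X ∩ cylC m u) ∧ U.Nonempty

/-!
If `σ^i U` meets `σ^j U` with `j < i`, some point `z` of the cylinder has `σ^p z` in it as well,
`p = i - j ≤ 4`, so the central block of `z` has period `p`. That block is a factor of `x` of
length `2m + 1 ≥ R_x(4)`, hence contains every factor of length `4`; by periodicity there are at
most `p ≤ 4` of them, against the Morse–Hedlund bound `p_x(4) ≥ 5`.
-/

section Words

open Function Set

variable {A : Type*}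

section Factors

def window (w : ℤ → A) (n : ℕ) (a : ℤ) : Fin n → A := fun i => w (a + i)

lemma factorsZ_eq_range (w : ℤ → A) (n : ℕ) : factorsZ w n = range (window w n) := by
  ext u
  simp only [factorsZ, window, mem_ofPred_eq, mem_range, funext_iff, eq_comm]

lemma window_mem_factorsZ (w : ℤ → A) (n : ℕ) (a : ℤ) : window w n a ∈ factorsZ w n := by
  rw [factorsZ_eq_range]
  exact mem_range_self a

lemma init_window (w : ℤ → A) (n : ℕ) (a : ℤ) : Fin.init (window w (n + 1) a) = window w n a :=
  rfl

lemma tail_window (w : ℤ → A) (n : ℕ) (a : ℤ) :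
    Fin.tail (window w (n + 1) a) = window w n (a + 1) := by
  funext i
  simp only [Fin.tail, window, Fin.val_succ]
  push_cast
  ring_nf

lemma image_init_factorsZ (w : ℤ → A) (n : ℕ) :
    Fin.init '' factorsZ w (n + 1) = factorsZ w n := by
  simp only [factorsZ_eq_range, ← range_comp, comp_def, init_window]

lemma image_tail_factorsZ (w : ℤ → A) (n : ℕ) :
    Fin.tail '' factorsZ w (n + 1) = factorsZ w n := by
  simp only [factorsZ_eq_range, ← range_comp, comp_def, tail_window]
  exact (add_right_surjective 1).range_comp (window w n)

lemma window_shiftFun (w : ℤ → A) (k : ℤ) (n : ℕ) (a : ℤ) :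
    window (shiftFun k w) n a = window w n (a + k) := by
  funext i
  simp only [window, shiftFun, add_right_comm]

lemma complexityZ_zero (w : ℤ → A) : complexityZ w 0 = 1 := by
  have : factorsZ w 0 = {window w 0 0} := by
    ext u
    simp only [mem_singleton_iff, Subsingleton.elim u (window w 0 0), window_mem_factorsZ]
  simp [complexityZ, this]

end Factors

section MorseHedlund

variable {w : ℤ → A} {n : ℕ}

lemma injOn_of_complexityZ_succ_le {f : (Fin (n + 1) → A) → Fin n → A}
    (hf : f '' factorsZ w (n + 1) = factorsZ w n) (hfin : (factorsZ w (n + 1)).Finite)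
    (hn : complexityZ w (n + 1) ≤ complexityZ w n) : InjOn f (factorsZ w (n + 1)) := by
  rw [complexityZ, complexityZ, Nat.card_coe_set_eq, Nat.card_coe_set_eq, ← hf] at hn
  exact (ncard_image_iff hfin).1 (le_antisymm (ncard_image_le hfin) hn)

/-- `p(n + 1) ≤ p(n)` means that every `n`-factor extends uniquely on both sides, so agreement
on one window of length `n` propagates to the whole word. -/
lemma apply_add_eq_of_window_eq (hfin : (factorsZ w (n + 1)).Finite)
    (hn : complexityZ w (n + 1) ≤ complexityZ w n) {a b : ℤ}
    (h : window w n a = window w n b) (t : ℤ) : w (a + t) = w (b + t) := by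
  have hinit := injOn_of_complexityZ_succ_le (image_init_factorsZ w n) hfin hn
  have htail := injOn_of_complexityZ_succ_le (image_tail_factorsZ w n) hfin hn
  have extend : ∀ a b, window w n a = window w n b → window w (n + 1) a = window w (n + 1) b :=
    fun a b h => hinit (window_mem_factorsZ w _ a) (window_mem_factorsZ w _ b)
      (by rw [init_window, init_window, h])
  have shift : ∀ s : ℤ, window w n (a + s) = window w n (b + s) := by
    intro s
    induction s using Int.induction_on with
    | zero => simpa using h
    | succ s ih => rw [← add_assoc, ← add_assoc, ← tail_window, ← tail_window, extend _ _ ih]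
    | pred s ih =>
      have hback : window w (n + 1) (a + -s - 1) = window w (n + 1) (b + -s - 1) :=
        htail (window_mem_factorsZ w _ _) (window_mem_factorsZ w _ _)
          (by rw [tail_window, tail_window, sub_add_cancel, sub_add_cancel, ih])
      rw [← add_sub_assoc, ← add_sub_assoc, ← init_window, hback, init_window]
  simpa [window] using congrFun (extend _ _ (shift t)) 0

lemma periodicWord_of_complexityZ_succ_le (hfin : (factorsZ w (n + 1)).Finite)
    (hn : complexityZ w (n + 1) ≤ complexityZ w n) : PeriodicWord w := by
  obtain ⟨c, d, hcd, hcd_eq⟩ := Finite.exists_lt_map_eq_of_forall_mem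
    (window_mem_factorsZ w n) (image_init_factorsZ w n ▸ hfin.image _)
  refine ⟨d - c, by omega, fun t => ?_⟩
  convert (apply_add_eq_of_window_eq hfin hn hcd_eq (t - c)).symm using 2 <;> ring

theorem add_one_le_complexityZ (hNP : ¬ PeriodicWord w) :
    ∀ {n : ℕ}, (factorsZ w n).Finite → n + 1 ≤ complexityZ w n
  | 0, _ => (complexityZ_zero w).ge
  | n + 1, hfin => by
    have ih := add_one_le_complexityZ hNP (image_init_factorsZ w n ▸ hfin.image _)
    have hlt : complexityZ w n < complexityZ w (n + 1) :=
      lt_of_not_ge fun hn => hNP (periodicWord_of_complexityZ_succ_le hfin hn)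
    omega

end MorseHedlund

section Recurrence

variable {w : ℤ → A} {n : ℕ}

lemma IsRecurrenceBound.mono {M N : ℕ} (h : IsRecurrenceBound w n M) (hMN : M ≤ N) :
    IsRecurrenceBound w n N := by
  intro u hu k
  obtain ⟨j, hkj, hjM, hju⟩ := h u hu k
  exact ⟨j, hkj, by omega, hju⟩

lemma isRecurrenceBound_recurrenceFn (h : UniformlyRecurrent w) (n : ℕ) :
    IsRecurrenceBound w n (recurrenceFn w n) :=
  Nat.sInf_mem (h n)

end Recurrence

section PeriodicWindow

def HasPeriodOn (w : ℤ → A) (p : ℕ) (a : ℤ) (M : ℕ) : Prop :=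
  ∀ s : ℤ, a ≤ s → s + p < a + M → w (s + p) = w s

variable {w : ℤ → A} {p : ℕ} {a : ℤ} {M : ℕ}

lemma HasPeriodOn.window_add_mul (h : HasPeriodOn w p a M) {n : ℕ} {b : ℤ} (hb : a ≤ b) :
    ∀ q : ℕ, b + p * q + n ≤ a + M → window w n (b + p * q) = window w n b
  | 0, _ => by simp
  | q + 1, hq => by
    have hp : (0 : ℤ) ≤ p := by positivity
    rw [← h.window_add_mul hb q (by push_cast at hq; nlinarith)]
    funext i
    have hi : ((i : ℕ) : ℤ) < n := by exact_mod_cast i.2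
    simp only [window]
    rw [← h (b + p * q + i) (by nlinarith) (by push_cast at hq; linarith)]
    push_cast
    ring_nf

lemma HasPeriodOn.factorsZ_subset_range {n : ℕ} (h : HasPeriodOn w p a M) (hp : 0 < p)
    (hR : IsRecurrenceBound w n M) :
    factorsZ w n ⊆ range fun r : Fin p => window w n (a + r) := by
  intro u hu
  obtain ⟨j, haj, hjM, hju⟩ := hR u hu a
  have hpZ : (0 : ℤ) < p := by exact_mod_cast hp
  have hr0 := Int.emod_nonneg (j - a) hpZ.ne'
  have hrp := Int.emod_lt_of_pos (j - a) hpZ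
  have hq0 : 0 ≤ (j - a) / p := Int.ediv_nonneg (by omega) hpZ.le
  have hj : j = a + (j - a) % p + p * ((j - a) / p).toNat := by
    rw [Int.toNat_of_nonneg hq0]
    linarith [Int.emod_add_mul_ediv (j - a) p]
  refine ⟨⟨((j - a) % p).toNat, by omega⟩, ?_⟩
  simp only [Int.toNat_of_nonneg hr0]
  rw [← h.window_add_mul (by omega) ((j - a) / p).toNat (by omega), ← hj]
  exact (funext hju).symm

lemma HasPeriodOn.of_window_eq {z : ℤ → A} {c b : ℤ} (h : HasPeriodOn z p c M)
    (hzw : window z M c = window w M b) : HasPeriodOn w p b M := by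
  have transfer : ∀ t, b ≤ t → t < b + M → w t = z (t - b + c) := by
    intro t ht htM
    have := congrFun hzw ⟨(t - b).toNat, by omega⟩
    simp only [window, Int.toNat_of_nonneg (sub_nonneg.2 ht)] at this
    convert this.symm using 2 <;> ring
  intro s hs hsM
  have hp : (0 : ℤ) ≤ p := by positivity
  rw [transfer s hs (by omega), transfer (s + p) (by omega) hsM,
    ← h (s - b + c) (by omega) (by omega)]
  ring_nf

end PeriodicWindow

lemma window_mem_factorsZ_of_mem_closure [TopologicalSpace A] [DiscreteTopology A]
    {w z : ℤ → A} (hz : z ∈ closure (range fun k : ℤ => shiftFun k w)) (n : ℕ) (a : ℤ) :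
    window z n a ∈ factorsZ w n := by
  have hopen : IsOpen ((fun y => window y n a) ⁻¹' {window z n a}) :=
    (isOpen_discrete _).preimage (continuous_pi fun i => continuous_apply _)
  obtain ⟨_, hy, ⟨k, rfl⟩⟩ := mem_closure_iff.1 hz _ hopen rfl
  have hy' : window (shiftFun k w) n a = window z n a := hy
  rw [← hy', window_shiftFun]
  exact window_mem_factorsZ w n (a + k)

lemma hasPeriodOn_of_mem_cylC {z : ℤ → A} {m p : ℕ} {u : Fin (2 * m + 1) → A}
    (hz : z ∈ cylC m u) (hpz : shiftFun p z ∈ cylC m u) : HasPeriodOn z p (-m) (2 * m + 1) := by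
  intro s hs hsM
  have hi : (s + m).toNat < 2 * m + 1 := by omega
  have hz_s := hz ⟨_, hi⟩
  have hpz_s := hpz ⟨_, hi⟩
  simp only [shiftFun, Int.toNat_of_nonneg (show 0 ≤ s + m by omega), add_sub_cancel_right]
    at hz_s hpz_s
  rw [hpz_s, hz_s]

lemma shiftFun_not_mem_cylC [TopologicalSpace A] [DiscreteTopology A] {x z : ℤ → A}
    (hUR : UniformlyRecurrent x) (hNP : ¬ PeriodicWord x)
    (hz : z ∈ closure (range fun k : ℤ => shiftFun k x)) {m p : ℕ}
    (hm : recurrenceFn x 4 ≤ 2 * m + 1) (hp : 0 < p) (hp4 : p ≤ 4)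
    {u : Fin (2 * m + 1) → A} (hzu : z ∈ cylC m u) : shiftFun p z ∉ cylC m u := by
  intro hpz
  have hblock := window_mem_factorsZ_of_mem_closure hz (2 * m + 1) (-m)
  rw [factorsZ_eq_range] at hblock
  obtain ⟨b, hb⟩ := hblock
  have hxper := (hasPeriodOn_of_mem_cylC hzu hpz).of_window_eq hb.symm
  have hsub := hxper.factorsZ_subset_range hp ((isRecurrenceBound_recurrenceFn hUR 4).mono hm)
  have hlow := add_one_le_complexityZ hNP ((finite_range _).subset hsub)
  have hup : complexityZ x 4 ≤ p :=
    calc complexityZ x 4 ≤ Nat.card (range fun r : Fin p => window x 4 (b + r)) :=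
          Nat.card_mono (finite_range _) hsub
      _ ≤ Nat.card (Fin p) := Finite.card_range_le _
      _ = p := Nat.card_fin p
  omega

end Words

theorem stmt11_general {A : Type*} [TopologicalSpace A] [DiscreteTopology A]
    (x : ℤ → A) (hUR : UniformlyRecurrent x) (hNP : ¬ PeriodicWord x)
    (X : Set (ℤ → A)) (hX : X = closure (Set.range fun n : ℤ => shiftFun n x))
    (m : ℕ) (hm : recurrenceFn x 4 ≤ 2 * m + 1)
    (U : Set (ℤ → A)) (hU : IsMCylinder X m U) :
    ∀ i j : ℤ, -2 ≤ i → i ≤ 2 → -2 ≤ j → j ≤ 2 → i ≠ j →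
      Disjoint (shiftSet i U) (shiftSet j U) := by
  intro i j hi₁ hi₂ hj₁ hj₂ hij
  wlog hji : j < i generalizing i j
  · exact (this j i hj₁ hj₂ hi₁ hi₂ hij.symm (by omega)).symm
  obtain ⟨⟨u, rfl⟩, -⟩ := hU
  subst hX
  rw [Set.disjoint_left]
  rintro y ⟨z, hz, rfl⟩ ⟨z', hz', hzz'⟩
  have hz'_eq : z' = shiftFun ((i - j).toNat : ℕ) z := by
    funext t
    have := congrFun hzz' (t - j)
    simp only [shiftFun, sub_add_cancel] at this
    simp only [shiftFun, Int.toNat_of_nonneg (show 0 ≤ i - j by omega), this]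
    ring_nf
  exact shiftFun_not_mem_cylC hUR hNP hz.1 hm (by omega) (by omega) hz.2 (hz'_eq ▸ hz'.2)

/-- if `m ≥ (R_x(4) − 1)/2` (i.e. `R_x(4) ≤ 2m+1`), then for every
`m`-cylinder `U` of `X`, the five shifts `σ^i(U)`, `−2 ≤ i ≤ 2`, are pairwise
disjoint. -/
theorem stmt11 {A : Type*} [Fintype A] [TopologicalSpace A] [DiscreteTopology A]
    (x : ℤ → A) (hUR : UniformlyRecurrent x) (hNP : ¬ PeriodicWord x)
    (X : Set (ℤ → A)) (hX : X = closure (Set.range fun n : ℤ => shiftFun n x))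
    (m : ℕ) (hm : recurrenceFn x 4 ≤ 2 * m + 1)
    (U : Set (ℤ → A)) (hU : IsMCylinder X m U) :
    ∀ i j : ℤ, -2 ≤ i → i ≤ 2 → -2 ≤ j → j ≤ 2 → i ≠ j →
      Disjoint (shiftSet i U) (shiftSet j U) :=
  stmt11_general x hUR hNP X hX m hm U hU
end

section
/- Let (X, σ) be a minimal subshift and V ⊆ X a nonempty clopen set such that σ^i(V), −2 ≤ i ≤ 2, are pairwise disjoint. Let U ⊆ V be nonempty clopen, and set τ_V = f_{σ^{−1}(V)} f_{σ(V)}. Then τ_V f_U τ_V^{−1} = f_{σ(U)} and τ_V^{−1} f_U τ_V = f_{σ^{−1}(U)}. -/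
/-- The group of self-homeomorphisms of a space, under composition
(`(g * h) x = g (h x)`). -/
instance homeomorphGroup {Y : Type*} [TopologicalSpace Y] : Group (Y ≃ₜ Y) where
  mul g h := h.trans g
  one := Homeomorph.refl Y
  inv := Homeomorph.symm
  mul_assoc _ _ _ := Homeomorph.ext fun _ => rfl
  one_mul _ := Homeomorph.ext fun _ => rfl
  mul_one _ := Homeomorph.ext fun _ => rfl
  inv_mul_cancel g := Homeomorph.ext fun y => g.symm_apply_apply y

/-- Membership in the topological full group of the shift on `X`: `g` admits a continuous
orbit cocycle `f` with `g p = σ^(f p) p`. -/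
def InFullGroup {A : Type*} [TopologicalSpace A] (X : Set (ℤ → A)) (g : ↥X ≃ₜ ↥X) : Prop :=
  ∃ f : ↥X → ℤ, Continuous f ∧ ∀ p : ↥X, ((g p : ℤ → A)) = shiftFun (f p) (p : ℤ → A)

/-- `g` is the homeomorphism `f_W`: it acts as `σ` on `W ∪ σ⁻¹(W)`, as `σ⁻²` on `σ(W)`,
and as the identity elsewhere. -/
def IsFOn {A : Type*} [TopologicalSpace A] (X W : Set (ℤ → A)) (g : ↥X ≃ₜ ↥X) : Prop :=
  ∀ p : ↥X,
    ((p : ℤ → A) ∈ W ∪ shiftSet (-1) W → ((g p : ℤ → A)) = shiftFun 1 (p : ℤ → A)) ∧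
    ((p : ℤ → A) ∈ shiftSet 1 W → ((g p : ℤ → A)) = shiftFun (-2) (p : ℤ → A)) ∧
    ((p : ℤ → A) ∉ W ∪ shiftSet (-1) W ∪ shiftSet 1 W → g p = p)

/-!
On the four blocks `σ⁻²V, σ⁻¹V, V, σV` the homeomorphism `τ_V = f_{σ⁻¹(V)} f_{σ(V)}` acts as `σ`
(it cycles the five disjoint blocks, sending `σ²V` back to `σ⁻²V`). A homeomorphism `h` of a
shift-invariant `X` that agrees with `σ` on `W ∪ σ⁻¹W ∪ σW` satisfies `h f_W = f_{σW} h`: on that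
set both sides are shifts, and off it `f_W` is the identity while `h`, being injective, cannot
send a point into `σ(W ∪ σ⁻¹W ∪ σW)`. Since `U ⊆ V`, this applies to `h = τ_V` with `W = U` and
with `W = σ⁻¹U`, giving the two identities.
-/

section Shift

variable {A : Type*}

@[simp]
lemma shiftFun_shiftFun (a b : ℤ) (p : ℤ → A) :
    shiftFun a (shiftFun b p) = shiftFun (a + b) p := by
  funext t
  simp only [shiftFun, add_assoc]

@[simp]
lemma shiftFun_zero (p : ℤ → A) : shiftFun 0 p = p := by
  funext t
  simp only [shiftFun, add_zero]

lemma mem_shiftSet_iff {i : ℤ} {W : Set (ℤ → A)} {q : ℤ → A} :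
    q ∈ shiftSet i W ↔ shiftFun (-i) q ∈ W := by
  constructor
  · rintro ⟨w, hw, rfl⟩
    simpa using hw
  · intro hq
    exact ⟨shiftFun (-i) q, hq, by simp⟩

lemma shiftSet_shiftSet (i j : ℤ) (W : Set (ℤ → A)) :
    shiftSet i (shiftSet j W) = shiftSet (i + j) W := by
  ext q
  simp only [mem_shiftSet_iff, shiftFun_shiftFun, neg_add, add_comm]

lemma shiftSet_zero (W : Set (ℤ → A)) : shiftSet 0 W = W := by
  ext q
  simp [mem_shiftSet_iff]

lemma shiftFun_mem_closure_orbit [TopologicalSpace A] {x p : ℤ → A}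
    (hp : p ∈ closure (Set.range fun n : ℤ => shiftFun n x)) (k : ℤ) :
    shiftFun k p ∈ closure (Set.range fun n : ℤ => shiftFun n x) :=
  map_mem_closure (continuous_pi fun t => continuous_apply (t + k)) hp
    (by rintro _ ⟨n, rfl⟩; exact ⟨k + n, (shiftFun_shiftFun k n x).symm⟩)

end Shift

namespace IsFOn

variable {A : Type*} [TopologicalSpace A] {X W : Set (ℤ → A)} {g : X ≃ₜ X}

lemma apply_eq_shiftFun_of_mem {V : Set (ℤ → A)} {k j : ℤ} (hg : IsFOn X (shiftSet k V) g)
    {p : X} (hp : (p : ℤ → A) ∈ shiftSet j V) (hj : j = k ∨ j = -1 + k) :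
    (g p : ℤ → A) = shiftFun 1 p := by
  refine (hg p).1 ?_
  rw [shiftSet_shiftSet]
  rcases hj with rfl | rfl
  exacts [Or.inl hp, Or.inr hp]

lemma apply_eq_self_of_not_mem {V : Set (ℤ → A)} {k : ℤ} (hg : IsFOn X (shiftSet k V) g)
    {p : X} (h₀ : (p : ℤ → A) ∉ shiftSet k V) (hm : (p : ℤ → A) ∉ shiftSet (-1 + k) V)
    (hp : (p : ℤ → A) ∉ shiftSet (1 + k) V) : g p = p := by
  refine (hg p).2.2 ?_
  simp only [shiftSet_shiftSet, Set.mem_union, not_or]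
  exact ⟨⟨h₀, hm⟩, hp⟩

theorem semiconjBy (hXσ : ∀ p ∈ X, shiftFun (-1) p ∈ X) {g' h : X ≃ₜ X}
    (hg : IsFOn X W g) (hg' : IsFOn X (shiftSet 1 W) g')
    (hh : ∀ p : X, (p : ℤ → A) ∈ W ∪ shiftSet (-1) W ∪ shiftSet 1 W →
      (h p : ℤ → A) = shiftFun 1 p) :
    SemiconjBy h g g' := by
  refine Homeomorph.ext fun p => Subtype.ext ?_
  change (h (g p) : ℤ → A) = g' (h p)
  by_cases h₁ : (p : ℤ → A) ∈ W ∪ shiftSet (-1) W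
  · have hgp := (hg p).1 h₁
    have hhp := hh p (Or.inl h₁)
    simp only [Set.mem_union, mem_shiftSet_iff, neg_neg] at h₁ hh
    rw [hh (g p) (by simp [hgp]; tauto), hgp,
      (hg' (h p)).1 (by simp [hhp, mem_shiftSet_iff]; tauto), hhp]
  by_cases h₂ : (p : ℤ → A) ∈ shiftSet 1 W
  · have hgp := (hg p).2.1 h₂
    have hhp := hh p (Or.inr h₂)
    simp only [Set.mem_union, mem_shiftSet_iff, neg_neg] at h₂ hh
    rw [hh (g p) (by simp [hgp]; tauto), hgp,
      (hg' (h p)).2.1 (by simp [hhp, mem_shiftSet_iff]; tauto), hhp]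
    simp
  rw [(hg p).2.2 fun hp => hp.elim h₁ h₂]
  refine congrArg Subtype.val ((hg' (h p)).2.2 fun hhp => ?_).symm
  -- `h p` lies in `σ(W ∪ σ⁻¹W ∪ σW)`, so it is also `h r = σ r` for `r = σ⁻¹ (h p)`.
  set r : X := ⟨shiftFun (-1) (h p), hXσ _ (h p).2⟩
  have hr : (r : ℤ → A) ∈ W ∪ shiftSet (-1) W ∪ shiftSet 1 W := by
    simp only [r, Set.mem_union, mem_shiftSet_iff, shiftFun_shiftFun] at hhp ⊢
    norm_num at hhp ⊢
    tauto
  have hrp : r = p := h.injective (Subtype.ext (by simp [hh r hr, r]))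
  exact (hrp ▸ hr).elim h₁ h₂

theorem mul_apply_of_mem_shiftSet {V : Set (ℤ → A)}
    (hdisj : ∀ i j : ℤ, -2 ≤ i → i ≤ 2 → -2 ≤ j → j ≤ 2 → i ≠ j →
      Disjoint (shiftSet i V) (shiftSet j V))
    {gm gp : X ≃ₜ X} (hgm : IsFOn X (shiftSet (-1) V) gm) (hgp : IsFOn X (shiftSet 1 V) gp)
    {p : X} {i : ℤ} (hi : -2 ≤ i ∧ i ≤ 1) (hp : (p : ℤ → A) ∈ shiftSet i V) :
    ((gm * gp) p : ℤ → A) = shiftFun 1 p := by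
  have sep : ∀ {q : ℤ → A} {i j : ℤ}, q ∈ shiftSet i V →
      -2 ≤ i ∧ i ≤ 2 ∧ -2 ≤ j ∧ j ≤ 2 ∧ i ≠ j → q ∉ shiftSet j V :=
    fun hq ⟨hi₁, hi₂, hj₁, hj₂, hij⟩ => Set.disjoint_left.mp (hdisj _ _ hi₁ hi₂ hj₁ hj₂ hij) hq
  change (gm (gp p) : ℤ → A) = _
  rcases le_or_gt 0 i with hi₀ | hi₀
  · have hgpp := hgp.apply_eq_shiftFun_of_mem hp (by omega)
    have hσp : (gp p : ℤ → A) ∈ shiftSet (1 + i) V := by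
      rw [hgpp, ← shiftSet_shiftSet]
      exact Set.mem_image_of_mem _ hp
    rw [hgm.apply_eq_self_of_not_mem (sep hσp (by omega)) (sep hσp (by omega))
      (sep hσp (by omega)), hgpp]
  · rw [hgp.apply_eq_self_of_not_mem (sep hp (by omega)) (sep hp (by omega)) (sep hp (by omega))]
    exact hgm.apply_eq_shiftFun_of_mem hp (by omega)

end IsFOn

theorem stmt15_general {A : Type*} [TopologicalSpace A]
    (x : ℤ → A)
    (X : Set (ℤ → A)) (hX : X = closure (Set.range fun n : ℤ => shiftFun n x))
    (V : Set (ℤ → A))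
    (hdisj : ∀ i j : ℤ, -2 ≤ i → i ≤ 2 → -2 ≤ j → j ≤ 2 → i ≠ j →
      Disjoint (shiftSet i V) (shiftSet j V))
    (U : Set (ℤ → A)) (hUV : U ⊆ V)
    (gU gUp gUm gVp gVm : ↥X ≃ₜ ↥X)
    (hgU : IsFOn X U gU)
    (hgUp : IsFOn X (shiftSet 1 U) gUp) (hgUm : IsFOn X (shiftSet (-1) U) gUm)
    (hgVp : IsFOn X (shiftSet 1 V) gVp) (hgVm : IsFOn X (shiftSet (-1) V) gVm) :
    (gVm * gVp) * gU * (gVm * gVp)⁻¹ = gUp ∧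
    (gVm * gVp)⁻¹ * gU * (gVm * gVp) = gUm := by
  have hXσ : ∀ p ∈ X, shiftFun (-1) p ∈ X := by
    rw [hX]
    exact fun p hp => shiftFun_mem_closure_orbit hp (-1)
  have hτ : ∀ i : ℤ, -2 ≤ i ∧ i ≤ 1 → ∀ p : X, (p : ℤ → A) ∈ shiftSet i U →
      ((gVm * gVp) p : ℤ → A) = shiftFun 1 p :=
    fun i hi p hp => IsFOn.mul_apply_of_mem_shiftSet hdisj hgVm hgVp hi (Set.image_mono hUV hp)
  have hconj : SemiconjBy (gVm * gVp) gU gUp := hgU.semiconjBy hXσ hgUp fun p hp => by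
    rcases hp with (hp | hp) | hp
    exacts [hτ 0 (by norm_num) p (by rwa [shiftSet_zero]), hτ _ (by norm_num) p hp,
      hτ _ (by norm_num) p hp]
  have hconj' : SemiconjBy (gVm * gVp) gUm gU := by
    refine hgUm.semiconjBy hXσ (by rwa [shiftSet_shiftSet, add_neg_cancel, shiftSet_zero])
      fun p hp => ?_
    rw [shiftSet_shiftSet, shiftSet_shiftSet] at hp
    rcases hp with (hp | hp) | hp
    exacts [hτ _ (by norm_num) p hp, hτ _ (by norm_num) p hp, hτ _ (by norm_num) p hp]
  exact ⟨mul_inv_eq_of_eq_mul hconj, by rw [mul_assoc, ← hconj'.eq, inv_mul_cancel_left]⟩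

/-- if the five shifts `σ^i(V)`, `−2 ≤ i ≤ 2`, are pairwise disjoint and
`U ⊆ V` is nonempty clopen, then with `τ_V = f_{σ⁻¹(V)} f_{σ(V)}` we have
`τ_V f_U τ_V⁻¹ = f_{σ(U)}` and `τ_V⁻¹ f_U τ_V = f_{σ⁻¹(U)}`. -/
theorem stmt15 {A : Type*} [Fintype A] [TopologicalSpace A] [DiscreteTopology A]
    (x : ℤ → A) (hUR : UniformlyRecurrent x) (hNP : ¬ PeriodicWord x)
    (X : Set (ℤ → A)) (hX : X = closure (Set.range fun n : ℤ => shiftFun n x))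
    (V : Set (ℤ → A)) (hVX : V ⊆ X) (hVne : V.Nonempty)
    (hVclopen : IsClopen (Subtype.val ⁻¹' V : Set ↥X))
    (hdisj : ∀ i j : ℤ, -2 ≤ i → i ≤ 2 → -2 ≤ j → j ≤ 2 → i ≠ j →
      Disjoint (shiftSet i V) (shiftSet j V))
    (U : Set (ℤ → A)) (hUV : U ⊆ V) (hUne : U.Nonempty)
    (hUclopen : IsClopen (Subtype.val ⁻¹' U : Set ↥X))
    (gU gUp gUm gVp gVm : ↥X ≃ₜ ↥X)
    (hgU : IsFOn X U gU)
    (hgUp : IsFOn X (shiftSet 1 U) gUp) (hgUm : IsFOn X (shiftSet (-1) U) gUm)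
    (hgVp : IsFOn X (shiftSet 1 V) gVp) (hgVm : IsFOn X (shiftSet (-1) V) gVm) :
    (gVm * gVp) * gU * (gVm * gVp)⁻¹ = gUp ∧
    (gVm * gVp)⁻¹ * gU * (gVm * gVp) = gUm :=
  stmt15_general x X hX V hdisj U hUV gU gUp gUm gVp gVm hgU hgUp hgUm hgVp hgVm
end
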